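/- Let Θ ∈ U(Vec ℝ) satisfy e₋₁Θ − Θe₋₁ = 0 and e₀Θ − Θe₀ = nΘ for some integer n (i.e., Θ is a lowest weight element of weight n for the adjoint action). Then for every λ ∈ ℂ: (i) if n > 0, then π_λ(Θ) = 0; (ii) if n ≤ 0, then there is a scalar c ∈ ℂ such that π_λ(Θ) is the operator g ↦ c·g^{(−n)}, the c-multiple of the (−n)-th derivative operator on ℂ[x]. -/

import Mathlib

/-!
Write `D` for `d/dx` and `E = x D` for the Euler operator, so that `π_λ(e₋₁) = D` and
`π_λ(e₀) = E + λ`. The hypotheses say that `T = π_λ(Θ)` commutes with `D` and raises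
`E`-weights by `n`, so `T xᵏ` has weight `n + k` and `D (T xᵏ) = k T xᵏ⁻¹`. By induction on `k`,
`T xᵏ` has zero derivative and nonzero weight (hence vanishes) except when `n + k = 0`.
For `n > 0` this gives `T = 0`; for `n = -m` the same argument applied to `T - c Dᵐ`,
with `c` chosen so that it kills `xᵐ`, gives `T = c Dᵐ`.
-/

open Polynomial

attribute [local instance 100] LieRing.ofAssociativeRing

noncomputable section

abbrev VecR : Type := Derivation ℂ (Polynomial ℂ) (Polynomial ℂ)

def eVF (n : ℤ) : VecR := Polynomial.mkDerivation ℂ (X ^ (n + 1).toNat)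

lemma vecR_apply (D : VecR) (f : Polynomial ℂ) :
    D f = derivative f * D X := by
  have h : D = Polynomial.mkDerivation ℂ (D X) :=
    Polynomial.derivation_ext (by rw [Polynomial.mkDerivation_X])
  conv_lhs => rw [h]
  rw [Polynomial.mkDerivation_apply]
  simp [smul_eq_mul, mul_comm]

def piL (lam : ℂ) : VecR →ₗ⁅ℂ⁆ Module.End ℂ (Polynomial ℂ) where
  toFun D := D.toLinearMap + lam • (LinearMap.mulLeft ℂ (derivative (D X)))
  map_add' D1 D2 := by
    refine LinearMap.ext fun g => ?_
    simp only [LinearMap.add_apply, LinearMap.smul_apply, LinearMap.mulLeft_apply,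
      Derivation.coeFn_coe, Derivation.add_apply, map_add, smul_eq_C_mul]
    ring
  map_smul' c D := by
    refine LinearMap.ext fun g => ?_
    simp only [RingHom.id_apply, LinearMap.add_apply, LinearMap.smul_apply,
      LinearMap.mulLeft_apply, Derivation.coeFn_coe, Derivation.smul_apply,
      map_smul, smul_eq_C_mul, derivative_C_mul]
    ring
  map_lie' {D1 D2} := by
    refine LinearMap.ext fun g => ?_
    simp only [LieHom.lie_apply, Ring.lie_def, Module.End.mul_apply, map_add, map_smul,
      LinearMap.add_apply, LinearMap.sub_apply, LinearMap.smul_apply,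
      Derivation.coeFn_coe, LinearMap.mulLeft_apply,
      Derivation.commutator_apply, Derivation.map_add, Derivation.map_smul]
    rw [vecR_apply D1 (D2 g), vecR_apply D2 (D1 g),
      vecR_apply D1 (derivative (D2 X) * g), vecR_apply D2 (derivative (D1 X) * g),
      vecR_apply D1 (D2 X), vecR_apply D2 (D1 X),
      vecR_apply D1 g, vecR_apply D2 g]
    simp only [derivative_sub, derivative_add, derivative_neg, derivative_mul, smul_eq_C_mul]
    ring

end
noncomputable section

/-- The universal enveloping algebra of `Vec ℝ`. -/
abbrev UVec : Type := UniversalEnvelopingAlgebra ℂ VecR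

/-- The image of `e n` in the universal enveloping algebra. -/
def eU (n : ℤ) : UVec := UniversalEnvelopingAlgebra.ι ℂ (eVF n)

/-- The extension of `π_λ` to an algebra homomorphism on `U(Vec ℝ)`. -/
def piU (lam : ℂ) : UVec →ₐ[ℂ] Module.End ℂ (Polynomial ℂ) :=
  UniversalEnvelopingAlgebra.lift ℂ (piL lam)

/-- The annihilator of the tensor density module `ℱ_λ`. -/
def AnnF (lam : ℂ) : Submodule ℂ UVec := LinearMap.ker (piU lam).toLinearMap

end

namespace Polynomial

section

variable {R : Type*} [CommSemiring R]

theorem X_mul_derivative_X_pow (k : ℕ) : X * derivative (X ^ k : R[X]) = (k : R) • X ^ k := by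
  cases k with
  | zero => simp
  | succ k => rw [derivative_X_pow, smul_eq_C_mul, Nat.add_sub_cancel, ← mul_assoc, mul_comm X,
      mul_assoc, ← pow_succ']

theorem iterate_derivative_X_mul_derivative (m : ℕ) (p : R[X]) :
    derivative^[m] (X * derivative p) = X * derivative^[m + 1] p + (m : R) • derivative^[m] p := by
  rw [mul_comm X, iterate_derivative_derivative_mul_X, mul_comm X, Nat.cast_smul_eq_nsmul]

end

section LowestWeight

variable {R : Type*} [CommRing R] {n : ℤ} {T : Module.End R R[X]}

theorem X_mul_derivative_apply_X_pow
    (hE : ∀ p, X * derivative (T p) - T (X * derivative p) = (n : R) • T p) (k : ℕ) :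
    X * derivative (T (X ^ k)) = ((n + k : ℤ) : R) • T (X ^ k) := by
  have h := hE (X ^ k)
  rw [X_mul_derivative_X_pow, map_smul] at h
  rw [Int.cast_add, Int.cast_natCast, add_smul, ← h, sub_add_cancel]

theorem eq_zero_of_apply_X_pow_eq_zero [IsDomain R] [CharZero R]
    (hD : ∀ p, derivative (T p) = T (derivative p))
    (hE : ∀ p, X * derivative (T p) - T (X * derivative p) = (n : R) • T p)
    (h : ∀ k : ℕ, n + k = 0 → T (X ^ k) = 0) : T = 0 := by
  suffices hX : ∀ k : ℕ, T (X ^ k) = 0 from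
    (basisMonomials R).ext fun k => by
      simpa [coe_basisMonomials, ← C_mul_X_pow_eq_monomial] using hX k
  have hvanish : ∀ k : ℕ, derivative (T (X ^ k)) = 0 → T (X ^ k) = 0 := by
    intro k hder
    by_cases hk : n + k = 0
    · exact h k hk
    have hweight := X_mul_derivative_apply_X_pow hE k
    rw [hder, mul_zero, eq_comm, smul_eq_zero] at hweight
    exact hweight.resolve_left (by exact_mod_cast hk)
  intro k
  induction k with
  | zero => exact hvanish 0 (by rw [hD, pow_zero, derivative_one, map_zero])
  | succ k ih =>
    refine hvanish (k + 1) ?_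
    rw [hD, derivative_X_pow, ← smul_eq_C_mul, map_smul, Nat.add_sub_cancel, ih, smul_zero]

end LowestWeight

theorem exists_eq_smul_derivative_pow {K : Type*} [Field K] [CharZero K] {n : ℤ}
    {T : Module.End K K[X]} {m : ℕ} (hnm : n + m = 0)
    (hD : ∀ p, derivative (T p) = T (derivative p))
    (hE : ∀ p, X * derivative (T p) - T (X * derivative p) = (n : K) • T p) :
    ∃ c : K, T = c • derivative ^ m := by
  have hconst : derivative (T (X ^ m)) = 0 := by
    have h := X_mul_derivative_apply_X_pow hE m
    rwa [hnm, Int.cast_zero, zero_smul, mul_eq_zero, or_iff_right X_ne_zero] at h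
  obtain ⟨a, ha⟩ : ∃ a, T (X ^ m) = C a := ⟨_, eq_C_of_derivative_eq_zero hconst⟩
  have hfac : (m.factorial : K) ≠ 0 := Nat.cast_ne_zero.2 m.factorial_ne_zero
  set c := a / m.factorial
  refine ⟨c, sub_eq_zero.1 (eq_zero_of_apply_X_pow_eq_zero (n := n) ?_ ?_ ?_)⟩
  · intro p
    simp only [LinearMap.sub_apply, LinearMap.smul_apply, Module.End.pow_apply, derivative_sub,
      derivative_smul, hD, ← Function.iterate_succ_apply' derivative, Function.iterate_succ_apply]
  · intro p
    have hn : (n : K) = -m := eq_neg_of_add_eq_zero_left (by exact_mod_cast hnm)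
    simp only [LinearMap.sub_apply, LinearMap.smul_apply, Module.End.pow_apply, derivative_sub,
      derivative_smul, iterate_derivative_X_mul_derivative, ← Function.iterate_succ_apply' derivative,
      Nat.succ_eq_add_one, mul_sub, mul_smul_comm]
    linear_combination (norm := module) hE p + hn • (c • derivative^[m] p)
  · intro k hk
    obtain rfl : k = m := by omega
    rw [LinearMap.sub_apply, LinearMap.smul_apply, Module.End.pow_apply,
      iterate_derivative_X_pow_eq_smul, Nat.descFactorial_self, Nat.sub_self, pow_zero,
      smul_smul, div_mul_cancel₀ _ hfac, ha, ← C_1, smul_C,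
      smul_eq_mul, mul_one, sub_self]

end Polynomial

theorem piL_apply (lam : ℂ) (D : VecR) (g : ℂ[X]) :
    piL lam D g = D g + lam • (derivative (D X) * g) := rfl

theorem eVF_X (n : ℤ) : eVF n X = X ^ (n + 1).toNat := mkDerivation_X ℂ _

theorem piU_eU_neg_one (lam : ℂ) : piU lam (eU (-1)) = derivative := by
  refine LinearMap.ext fun g => ?_
  rw [eU, piU, UniversalEnvelopingAlgebra.lift_ι_apply, piL_apply, vecR_apply, eVF_X]
  simp

theorem piU_eU_zero_apply (lam : ℂ) (g : ℂ[X]) :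
    piU lam (eU 0) g = X * derivative g + lam • g := by
  rw [eU, piU, UniversalEnvelopingAlgebra.lift_ι_apply, piL_apply, vecR_apply, eVF_X]
  simp [mul_comm]

theorem derivative_piU_apply {Θ : UVec} (h1 : eU (-1) * Θ - Θ * eU (-1) = 0) (lam : ℂ)
    (p : ℂ[X]) : derivative (piU lam Θ p) = piU lam Θ (derivative p) := by
  have h := congr($(congrArg (piU lam) h1) p)
  rwa [map_sub, map_mul, map_mul, map_zero, piU_eU_neg_one, LinearMap.sub_apply,
    Module.End.mul_apply, Module.End.mul_apply, LinearMap.zero_apply, sub_eq_zero] at h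

theorem X_mul_derivative_piU_apply {Θ : UVec} {n : ℤ}
    (h0 : eU 0 * Θ - Θ * eU 0 = (n : ℂ) • Θ) (lam : ℂ) (p : ℂ[X]) :
    X * derivative (piU lam Θ p) - piU lam Θ (X * derivative p) = (n : ℂ) • piU lam Θ p := by
  have h := congr($(congrArg (piU lam) h0) p)
  rw [map_sub, map_mul, map_mul, map_smul, LinearMap.sub_apply, Module.End.mul_apply,
    Module.End.mul_apply, LinearMap.smul_apply, piU_eU_zero_apply, piU_eU_zero_apply, map_add,
    map_smul] at h
  rw [← h]
  abel

/-- If `Θ ∈ U(Vec ℝ)` is a lowest weight element of weight `n` for the adjoint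
action (`[e₋₁, Θ] = 0` and `[e₀, Θ] = nΘ`), then for every `λ`: if `n > 0` then
`π_λ(Θ) = 0`, and if `n ≤ 0` then `π_λ(Θ)` is a scalar multiple of the
`(−n)`-th derivative operator on `ℂ[x]`. -/
theorem lowest_weight_action (Θ : UVec) (n : ℤ)
    (h1 : eU (-1) * Θ - Θ * eU (-1) = 0)
    (h0 : eU 0 * Θ - Θ * eU 0 = (n : ℂ) • Θ) (lam : ℂ) :
    (0 < n → piU lam Θ = 0) ∧
    (n ≤ 0 → ∃ c : ℂ,
      piU lam Θ = c • ((Polynomial.derivative : Module.End ℂ (Polynomial ℂ)) ^ (-n).toNat)) := by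
  have hD := derivative_piU_apply h1 lam
  have hE := X_mul_derivative_piU_apply h0 lam
  exact ⟨fun hn => eq_zero_of_apply_X_pow_eq_zero hD hE fun k hk => by omega,
    fun hn => exists_eq_smul_derivative_pow (by omega) hD hE⟩
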